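/- Let T be the monotone transport map from the standard normal to the exponential power distribution with density proportional to e^{-λ|x|^p}. Then its derivative satisfies T'(z) ~ (z/(λp))·(z²/(2λ))^{1/p - 1} as z → ∞. -/

import Mathlib

open Real MeasureTheory Filter

/-- The standard normal density. -/
noncomputable def stdNormalPDF (z : ℝ) : ℝ :=
  (1 / Real.sqrt (2 * Real.pi)) * Real.exp (-z ^ 2 / 2)

/-- The standard normal cumulative distribution function. -/
noncomputable def stdNormalCDF (z : ℝ) : ℝ := ∫ t in Set.Iic z, stdNormalPDF t

/-- Normalizing constant of the exponential power distribution. -/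
noncomputable def expPowerZ (p lam : ℝ) : ℝ := ∫ x : ℝ, Real.exp (-lam * |x| ^ p)

/-- The density of the exponential power distribution with parameters `p, lam`. -/
noncomputable def expPowerPDF (p lam : ℝ) (x : ℝ) : ℝ :=
  (expPowerZ p lam)⁻¹ * Real.exp (-lam * |x| ^ p)

/-- The CDF of the exponential power distribution with parameters `p, lam`. -/
noncomputable def expPowerCDF (p lam : ℝ) (x : ℝ) : ℝ :=
  ∫ t in Set.Iic x, expPowerPDF p lam t

open Set Topology

/-!
Since `1 - P⁰(T z) = 1 - Φ⁰(z)`, the derivative `T' = φ⁰ / π⁰(T)` is a ratio of densities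
at points with equal tails. L'Hôpital's rule gives the tail asymptotics
`1 - Φ⁰(z) ∼ φ⁰(z) / z` (Mills' ratio) and `1 - P⁰(x) ∼ x^(1-p) e^(-λ x^p) / (Z λ p)`,
so `T'(z) ∼ (z / (λ p)) (T z)^(1-p)`. Taking logarithms in the same tail identity gives
`λ (T z)^p ∼ z² / 2`, i.e. `T z ∼ (z² / (2 λ))^(1/p)`, which turns `(T z)^(1-p)` into
`(z² / (2 λ))^(1/p - 1)`.
-/

section Tail

variable {f : ℝ → ℝ}

lemma one_sub_integral_Iic (hf : Integrable f) (h1 : ∫ t, f t = 1) (x : ℝ) :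
    1 - ∫ t in Iic x, f t = ∫ t in Ioi x, f t := by
  rw [← h1, ← intervalIntegral.integral_Iic_add_Ioi hf.integrableOn hf.integrableOn,
    add_sub_cancel_left]

lemma integral_Ioi_pos (hf : Integrable f) (hpos : ∀ x, 0 < f x) (x : ℝ) :
    0 < ∫ t in Ioi x, f t := by
  rw [setIntegral_pos_iff_support_of_nonneg_ae (Eventually.of_forall fun t => (hpos t).le)
    hf.integrableOn, Function.support_eq_univ fun t => (hpos t).ne', univ_inter]
  simp

lemma antitone_integral_Ioi (hf : Integrable f) (hf0 : ∀ x, 0 ≤ f x) :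
    Antitone fun x => ∫ t in Ioi x, f t := fun _ _ hab =>
  setIntegral_mono_set hf.integrableOn (Eventually.of_forall hf0)
    (Ioi_subset_Ioi hab).eventuallyLE

lemma hasDerivAt_integral_Ioi (hf : Integrable f) (hc : Continuous f) (x : ℝ) :
    HasDerivAt (fun x => ∫ t in Ioi x, f t) (-f x) x := by
  have hsplit :
      (fun x => ∫ t in Ioi x, f t) = fun x => (∫ t in x..0, f t) + ∫ t in Ioi 0, f t := by
    funext x
    rw [intervalIntegral.integral_interval_add_Ioi hf.integrableOn hf.integrableOn]
  rw [hsplit]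
  exact (intervalIntegral.integral_hasDerivAt_left (hc.intervalIntegrable x 0)
    (hc.stronglyMeasurableAtFilter _ _) hc.continuousAt).add_const _

lemma tendsto_integral_Ioi_div (hf : Integrable f) (hc : Continuous f)
    (hf0 : ∀ᶠ x in atTop, f x ≠ 0) {g ε : ℝ → ℝ}
    (hg : ∀ᶠ x in atTop, HasDerivAt g (-f x * (1 + ε x)) x) (hg0 : Tendsto g atTop (𝓝 0))
    (hε : Tendsto ε atTop (𝓝 0)) :
    Tendsto (fun x => (∫ t in Ioi x, f t) / g x) atTop (𝓝 1) := by
  have h1 : Tendsto (fun x => 1 + ε x) atTop (𝓝 1) := by simpa using hε.const_add 1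
  have hinv : Tendsto (fun x => (1 + ε x)⁻¹) atTop (𝓝 1) := by
    simpa using h1.inv₀ one_ne_zero
  refine HasDerivAt.lhopital_zero_atTop (Eventually.of_forall (hasDerivAt_integral_Ioi hf hc)) hg
    ?_ (tendsto_integral_Ioi_zero tendsto_id) hg0 (hinv.congr' ?_)
  · filter_upwards [hf0, h1.eventually_ne one_ne_zero] with x hfx hεx
    exact mul_ne_zero (neg_ne_zero.mpr hfx) hεx
  · filter_upwards [hf0] with x hfx
    rw [neg_mul, neg_div_neg_eq, div_mul_cancel_left₀ hfx]

end Tail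

section StdNormal

open ProbabilityTheory

lemma stdNormalPDF_eq_gaussianPDFReal : stdNormalPDF = gaussianPDFReal 0 1 := by
  funext z
  simp [stdNormalPDF, gaussianPDFReal]

lemma stdNormalPDF_pos (z : ℝ) : 0 < stdNormalPDF z := by
  rw [stdNormalPDF_eq_gaussianPDFReal]
  exact gaussianPDFReal_pos _ _ _ one_ne_zero

lemma integrable_stdNormalPDF : Integrable stdNormalPDF := by
  rw [stdNormalPDF_eq_gaussianPDFReal]
  exact integrable_gaussianPDFReal _ _

lemma continuous_stdNormalPDF : Continuous stdNormalPDF := by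
  unfold stdNormalPDF
  fun_prop

lemma one_sub_stdNormalCDF (z : ℝ) : 1 - stdNormalCDF z = ∫ t in Ioi z, stdNormalPDF t := by
  refine one_sub_integral_Iic integrable_stdNormalPDF ?_ z
  rw [stdNormalPDF_eq_gaussianPDFReal]
  exact integral_gaussianPDFReal_eq_one _ one_ne_zero

lemma hasDerivAt_stdNormalPDF (z : ℝ) : HasDerivAt stdNormalPDF (-z * stdNormalPDF z) z := by
  have h : HasDerivAt (fun z : ℝ => -z ^ 2 / 2) (-z) z :=
    (((hasDerivAt_pow 2 z).neg).div_const 2).congr_deriv (by norm_num; ring)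
  exact ((h.exp).const_mul (1 / √(2 * π))).congr_deriv (by unfold stdNormalPDF; ring)

lemma tendsto_stdNormalPDF_atTop : Tendsto stdNormalPDF atTop (𝓝 0) := by
  have h : Tendsto (fun z : ℝ => -z ^ 2 / 2) atTop atBot := by
    have := (tendsto_pow_atTop (α := ℝ) two_ne_zero).atTop_div_const (two_pos : (0 : ℝ) < 2)
    exact (tendsto_neg_atTop_atBot.comp this).congr fun z => (neg_div 2 (z ^ 2)).symm
  have := (tendsto_exp_atBot.comp h).const_mul (1 / √(2 * π))
  rwa [mul_zero] at this

lemma tendsto_one_sub_stdNormalCDF_div :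
    Tendsto (fun z => (1 - stdNormalCDF z) / (stdNormalPDF z / z)) atTop (𝓝 1) := by
  simp_rw [one_sub_stdNormalCDF]
  refine tendsto_integral_Ioi_div integrable_stdNormalPDF continuous_stdNormalPDF
    (Eventually.of_forall fun z => (stdNormalPDF_pos z).ne') (ε := fun z => (z ^ 2)⁻¹) ?_
    (tendsto_stdNormalPDF_atTop.div_atTop tendsto_id)
    (tendsto_inv_atTop_zero.comp (tendsto_pow_atTop two_ne_zero))
  filter_upwards [eventually_gt_atTop 0] with z hz
  refine ((hasDerivAt_stdNormalPDF z).div (hasDerivAt_id' z) hz.ne').congr_deriv ?_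
  field_simp
  ring

end StdNormal

section ExpPower

variable {p lam : ℝ}

lemma expPowerZ_eq (hp : 0 < p) (hlam : 0 < lam) :
    expPowerZ p lam = 2 * (lam ^ (-1 / p) * Gamma (1 / p + 1)) := by
  rw [expPowerZ, integral_comp_abs (f := fun x => exp (-lam * x ^ p)),
    integral_exp_neg_mul_rpow hp hlam]

lemma expPowerZ_pos (hp : 0 < p) (hlam : 0 < lam) : 0 < expPowerZ p lam := by
  rw [expPowerZ_eq hp hlam]
  have := Gamma_pos_of_pos (by positivity : 0 < 1 / p + 1)
  positivity

lemma expPowerPDF_pos (hp : 0 < p) (hlam : 0 < lam) (x : ℝ) : 0 < expPowerPDF p lam x :=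
  mul_pos (inv_pos.mpr (expPowerZ_pos hp hlam)) (exp_pos _)

lemma continuous_expPowerPDF (hp : 0 < p) : Continuous (expPowerPDF p lam) := by
  have : Continuous fun x : ℝ => |x| ^ p := continuous_abs.rpow_const fun _ => Or.inr hp.le
  unfold expPowerPDF
  fun_prop

lemma integral_expPowerPDF (hp : 0 < p) (hlam : 0 < lam) : ∫ x, expPowerPDF p lam x = 1 := by
  simp only [expPowerPDF]
  rw [integral_const_mul, ← expPowerZ, inv_mul_cancel₀ (expPowerZ_pos hp hlam).ne']

lemma integrable_expPowerPDF (hp : 0 < p) (hlam : 0 < lam) : Integrable (expPowerPDF p lam) :=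
  Integrable.of_integral_ne_zero (by rw [integral_expPowerPDF hp hlam]; exact one_ne_zero)

lemma one_sub_expPowerCDF (hp : 0 < p) (hlam : 0 < lam) (x : ℝ) :
    1 - expPowerCDF p lam x = ∫ t in Ioi x, expPowerPDF p lam t :=
  one_sub_integral_Iic (integrable_expPowerPDF hp hlam) (integral_expPowerPDF hp hlam) x

end ExpPower

section ExpPowerTail

variable {p lam : ℝ}

noncomputable def expPowerTailApprox (p lam x : ℝ) : ℝ :=
  (expPowerZ p lam * (lam * p))⁻¹ * exp (-(lam * x ^ p)) * x ^ (1 - p)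

lemma hasDerivAt_expPowerTailApprox (hp : 0 < p) (hlam : 0 < lam) {x : ℝ} (hx : 0 < x) :
    HasDerivAt (expPowerTailApprox p lam)
      (-expPowerPDF p lam x * (1 + (p - 1) / (lam * p) * x ^ (-p))) x := by
  have hexp : HasDerivAt (fun x => exp (-(lam * x ^ p)))
      (exp (-(lam * x ^ p)) * -(lam * (p * x ^ (p - 1)))) x :=
    (((hasDerivAt_rpow_const (Or.inl hx.ne')).const_mul lam).neg).exp
  have hpow : HasDerivAt (fun x => x ^ (1 - p)) ((1 - p) * x ^ (1 - p - 1)) x :=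
    hasDerivAt_rpow_const (Or.inl hx.ne')
  refine ((hexp.const_mul _).mul hpow).congr_deriv ?_
  have hcancel : x ^ (p - 1) * x ^ (1 - p) = 1 := by
    rw [← rpow_add hx, sub_add_sub_cancel, sub_self, rpow_zero]
  have hZ := (expPowerZ_pos hp hlam).ne'
  rw [show 1 - p - 1 = -p by ring, expPowerPDF, abs_of_pos hx]
  field_simp
  linear_combination -(lam * p) * hcancel

lemma tendsto_expPowerTailApprox_atTop (hp : 0 < p) (hlam : 0 < lam) :
    Tendsto (expPowerTailApprox p lam) atTop (𝓝 0) := by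
  have h := (tendsto_rpow_mul_exp_neg_mul_atTop_nhds_zero ((1 - p) / p) lam hlam).comp
    (tendsto_rpow_atTop hp)
  have := h.const_mul (expPowerZ p lam * (lam * p))⁻¹
  rw [mul_zero] at this
  refine this.congr' ?_
  filter_upwards [eventually_gt_atTop 0] with x hx
  rw [Function.comp_apply, ← rpow_mul hx.le, mul_div_cancel₀ _ hp.ne', expPowerTailApprox, neg_mul]
  ring

lemma tendsto_one_sub_expPowerCDF_div (hp : 0 < p) (hlam : 0 < lam) :
    Tendsto (fun x => (1 - expPowerCDF p lam x) / expPowerTailApprox p lam x) atTop (𝓝 1) := by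
  simp_rw [one_sub_expPowerCDF hp hlam]
  refine tendsto_integral_Ioi_div (integrable_expPowerPDF hp hlam) (continuous_expPowerPDF hp)
    (Eventually.of_forall fun x => (expPowerPDF_pos hp hlam x).ne') ?_
    (tendsto_expPowerTailApprox_atTop hp hlam) (ε := fun x => (p - 1) / (lam * p) * x ^ (-p)) ?_
  · filter_upwards [eventually_gt_atTop 0] with x hx
    exact hasDerivAt_expPowerTailApprox hp hlam hx
  · simpa using (tendsto_rpow_neg_atTop hp).const_mul ((p - 1) / (lam * p))

end ExpPowerTail

section LogAsymptotics

variable {α : Type*} {l : Filter α}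

lemma tendsto_log_div_of_tendsto_div_one {u v h : α → ℝ} {L : ℝ}
    (huv : Tendsto (fun x => u x / v x) l (𝓝 1)) (hh : Tendsto h l atTop)
    (hv : Tendsto (fun x => log (v x) / h x) l (𝓝 L)) :
    Tendsto (fun x => log (u x) / h x) l (𝓝 L) := by
  have hlog : Tendsto (fun x => log (u x / v x) / h x) l (𝓝 0) := by
    have := (continuousAt_log one_ne_zero).tendsto.comp huv
    rw [log_one] at this
    exact this.div_atTop hh
  refine (zero_add L ▸ hlog.add hv).congr' ?_
  filter_upwards [huv.eventually_ne one_ne_zero] with x hx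
  obtain ⟨hu, hv⟩ := div_ne_zero_iff.mp hx
  rw [log_div hu hv, ← add_div, sub_add_cancel]

lemma tendsto_div_of_tendsto_div_div {a b d : α → ℝ} {c : ℝ}
    (hb : Tendsto (fun x => a x / b x) l (𝓝 c)) (hd : Tendsto (fun x => a x / d x) l (𝓝 c))
    (hc : c ≠ 0) : Tendsto (fun x => d x / b x) l (𝓝 1) := by
  refine (div_self hc ▸ hb.div hd hc).congr' ?_
  filter_upwards [hd.eventually_ne hc] with x hx
  exact div_div_div_cancel_left' _ _ (div_ne_zero_iff.mp hx).1

end LogAsymptotics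

lemma tendsto_log_div_const_mul_rpow {c r : ℝ} (hc : c ≠ 0) (hr : 0 < r) :
    Tendsto (fun x => log x / (c * x ^ r)) atTop (𝓝 0) :=
  ((isLittleO_log_rpow_atTop hr).const_mul_right' (isUnit_iff_ne_zero.mpr hc)).tendsto_div_nhds_zero

lemma tendsto_log_mul_exp_neg_mul_rpow_div {C a : ℝ} {h : ℝ → ℝ} (hC : C ≠ 0)
    (hh : Tendsto h atTop atTop) (hlog : Tendsto (fun x => log x / h x) atTop (𝓝 0)) :
    Tendsto (fun x => log (C * exp (-h x) * x ^ a) / h x) atTop (𝓝 (-1)) := by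
  have hlim : Tendsto (fun x => log C / h x + -1 + a * (log x / h x)) atTop (𝓝 (-1)) := by
    simpa using ((tendsto_const_nhds.div_atTop hh).add_const (-1)).add (hlog.const_mul a)
  refine hlim.congr' ?_
  filter_upwards [eventually_gt_atTop 0, hh.eventually_gt_atTop 0] with x hx hhx
  rw [log_mul (mul_ne_zero hC (exp_ne_zero _)) (rpow_pos_of_pos hx a).ne',
    log_mul hC (exp_ne_zero _), log_exp, log_rpow hx]
  field_simp

lemma tendsto_log_one_sub_stdNormalCDF :
    Tendsto (fun z => log (1 - stdNormalCDF z) / (z ^ 2 / 2)) atTop (𝓝 (-1)) := by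
  have hh : Tendsto (fun z : ℝ => z ^ 2 / 2) atTop atTop :=
    (tendsto_pow_atTop two_ne_zero).atTop_div_const two_pos
  have hlog : Tendsto (fun z => log z / (z ^ 2 / 2)) atTop (𝓝 0) := by
    refine (tendsto_log_div_const_mul_rpow (c := 1 / 2) one_half_pos.ne' two_pos).congr fun z => ?_
    rw [rpow_two]
    ring
  refine tendsto_log_div_of_tendsto_div_one tendsto_one_sub_stdNormalCDF_div hh
    ((tendsto_log_mul_exp_neg_mul_rpow_div (C := 1 / √(2 * π)) (a := -1) (by positivity) hh
      hlog).congr' ?_)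
  filter_upwards [eventually_gt_atTop 0] with z hz
  simp only [rpow_neg_one, stdNormalPDF, div_eq_mul_inv, neg_mul]

lemma tendsto_log_one_sub_expPowerCDF {p lam : ℝ} (hp : 0 < p) (hlam : 0 < lam) :
    Tendsto (fun x => log (1 - expPowerCDF p lam x) / (lam * x ^ p)) atTop (𝓝 (-1)) := by
  have hh : Tendsto (fun x => lam * x ^ p) atTop atTop :=
    (tendsto_rpow_atTop hp).const_mul_atTop hlam
  have hC : (expPowerZ p lam * (lam * p))⁻¹ ≠ 0 := by
    have := expPowerZ_pos hp hlam
    positivity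
  exact tendsto_log_div_of_tendsto_div_one (tendsto_one_sub_expPowerCDF_div hp hlam) hh
    (tendsto_log_mul_exp_neg_mul_rpow_div hC hh (tendsto_log_div_const_mul_rpow hlam.ne' hp))

lemma Antitone.tendsto_atTop_of_tendsto_comp {α : Type*} {l : Filter α} {g : ℝ → ℝ}
    (hg : Antitone g) (hpos : ∀ x, 0 < g x) {T : α → ℝ}
    (h : Tendsto (fun z => g (T z)) l (𝓝 0)) : Tendsto T l atTop := by
  refine tendsto_atTop.mpr fun M => ?_
  filter_upwards [h.eventually (gt_mem_nhds (hpos M))] with z hz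
  exact le_of_not_gt fun hlt => (hg hlt.le).not_gt hz

section Transport

variable {p lam : ℝ} {T : ℝ → ℝ}

lemma tendsto_transport_atTop (hp : 0 < p) (hlam : 0 < lam)
    (hT : ∀ z, expPowerCDF p lam (T z) = stdNormalCDF z) : Tendsto T atTop atTop := by
  have hint := integrable_expPowerPDF hp hlam
  refine (antitone_integral_Ioi hint fun x => (expPowerPDF_pos hp hlam x).le)
    |>.tendsto_atTop_of_tendsto_comp (integral_Ioi_pos hint (expPowerPDF_pos hp hlam)) ?_
  simp_rw [← one_sub_expPowerCDF hp hlam, hT, one_sub_stdNormalCDF]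
  exact tendsto_integral_Ioi_zero tendsto_id

/-- Comparing the logarithmic tails `log (1 - Φ⁰(z)) ∼ -z²/2` and
`log (1 - P⁰(x)) ∼ -λ x^p` along `x = T z` gives `λ (T z)^p ∼ z²/2`. -/
lemma tendsto_transport_div_rpow (hp : 0 < p) (hlam : 0 < lam)
    (hT : ∀ z, expPowerCDF p lam (T z) = stdNormalCDF z) :
    Tendsto (fun z => T z / (z ^ 2 / (2 * lam)) ^ (1 / p)) atTop (𝓝 1) := by
  have hTtop := tendsto_transport_atTop hp hlam hT
  have hP : Tendsto (fun z => log (1 - stdNormalCDF z) / (lam * T z ^ p)) atTop (𝓝 (-1)) := by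
    simpa only [Function.comp_def, hT] using (tendsto_log_one_sub_expPowerCDF hp hlam).comp hTtop
  have hratio := (tendsto_div_of_tendsto_div_div tendsto_log_one_sub_stdNormalCDF hP
    (by norm_num)).rpow_const (p := 1 / p) (Or.inl one_ne_zero)
  rw [one_rpow] at hratio
  refine hratio.congr' ?_
  filter_upwards [eventually_gt_atTop 0, hTtop.eventually_gt_atTop 0] with z hz hTz
  rw [show lam * T z ^ p / (z ^ 2 / 2) = T z ^ p / (z ^ 2 / (2 * lam)) by field_simp,
    div_rpow (by positivity) (by positivity), ← rpow_mul hTz.le, mul_one_div_cancel hp.ne',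
    rpow_one]

lemma transport_deriv_div_eq (hp : 0 < p) (hlam : 0 < lam) {z t : ℝ} (hz : 0 < z) (ht : 0 < t)
    (hzt : expPowerCDF p lam t = stdNormalCDF z) :
    stdNormalPDF z / expPowerPDF p lam t / (z / (lam * p) * (z ^ 2 / (2 * lam)) ^ (1 / p - 1)) =
      (t / (z ^ 2 / (2 * lam)) ^ (1 / p)) ^ (1 - p) *
        ((1 - expPowerCDF p lam t) / expPowerTailApprox p lam t) /
        ((1 - stdNormalCDF z) / (stdNormalPDF z / z)) := by
  have hu : 0 < z ^ 2 / (2 * lam) := by positivity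
  have htail : 0 < 1 - stdNormalCDF z := by
    rw [one_sub_stdNormalCDF]
    exact integral_Ioi_pos integrable_stdNormalPDF stdNormalPDF_pos z
  rw [hzt, div_rpow ht.le (by positivity), ← rpow_mul hu.le,
    show 1 / p * (1 - p) = 1 / p - 1 by field_simp, expPowerTailApprox, expPowerPDF,
    abs_of_pos ht, neg_mul]
  field_simp

end Transport

theorem exp_power_transport_deriv_asymptotics (p lam : ℝ) (hp : 0 < p) (hlam : 0 < lam)
    (T T' : ℝ → ℝ) (hT : ∀ z, expPowerCDF p lam (T z) = stdNormalCDF z)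
    (hT' : ∀ z, T' z = stdNormalPDF z / expPowerPDF p lam (T z)) :
    Tendsto (fun z => T' z / ((z / (lam * p)) * (z ^ 2 / (2 * lam)) ^ (1 / p - 1)))
      atTop (nhds 1) := by
  have hTtop := tendsto_transport_atTop hp hlam hT
  have hpow := (tendsto_transport_div_rpow hp hlam hT).rpow_const (p := 1 - p) (Or.inl one_ne_zero)
  have hP := (tendsto_one_sub_expPowerCDF_div hp hlam).comp hTtop
  have hlim := (hpow.mul hP).div tendsto_one_sub_stdNormalCDF_div one_ne_zero
  rw [one_rpow, mul_one, div_one] at hlim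
  refine hlim.congr' ?_
  filter_upwards [eventually_gt_atTop 0, hTtop.eventually_gt_atTop 0] with z hz hTz
  rw [hT' z, transport_deriv_div_eq hp hlam hz hTz (hT z)]
  rfl
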